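/- arXiv:0907.3254 — 6 statements merged into one kernel-verified Lean document; each statement's English description precedes it below -/
import Mathlib

section
/- Let n ≥ 1 and let a = (a_1,…,a_n) be a sequence of integers with a_1 + ⋯ + a_n = 1. For 0 ≤ i ≤ n−1 let σ^i(a) = (a_{i+1},…,a_n,a_1,…,a_i) denote the i-th cyclic shift of a, and for a sequence b of length n let N(b) be the number of indices m with 0 ≤ m ≤ n−1 such that b_1 + ⋯ + b_m ≤ 0 (the empty sum for m = 0 counts as 0 and is nonpositive). Then for each k with 1 ≤ k ≤ n there is exactly one index i with 0 ≤ i ≤ n−1 such that N(σ^i(a)) = k. -/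
open Finset

/-!
Let `S` be the partial sums of the periodic extension of `a`, so `S (t + n) = S t + 1`. The
`m`-th partial sum of `σ^i a` is `S (i + m) - S i`; with `t = (i + m) mod n` it is nonpositive
exactly when `(S t, -t) ≤ (S i, -i)` lexicographically, the wrap-around adding `1` being
compensated by `t < i`. Thus `N (σ^i a)` is the rank of `i` for an injective key on `Fin n`, and
the ranks of `n` distinct values are exactly `1, …, n`.
-/

/-- The sum of the first `m` entries of a sequence `p` of length `N`. -/
def psum {N : ℕ} (p : Fin N → ℤ) (m : ℕ) : ℤ :=
  ∑ j ∈ Finset.univ.filter (fun j : Fin N => (j : ℕ) < m), p j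

section Rank

variable {α β : Type*} [Fintype α] [LinearOrder β] {f : α → β}

lemma card_filter_le_lt_of_lt {i j : α} (h : f i < f j) :
    #{t | f t ≤ f i} < #{t | f t ≤ f j} :=
  card_lt_card <|
    (ssubset_iff_of_subset <| monotone_filter_right _ fun _ _ ht => ht.trans h.le).mpr
      ⟨j, by simp, by simpa using h⟩

lemma existsUnique_card_filter_le_eq (hf : Function.Injective f) {k : ℕ} (hk1 : 1 ≤ k)
    (hk2 : k ≤ Fintype.card α) : ∃! i, #{t | f t ≤ f i} = k := by
  set rank : α → ℕ := fun i => #{t | f t ≤ f i}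
  have rank_injective : Function.Injective rank := fun i j h =>
    hf <| le_antisymm (not_lt.mp fun hlt => (card_filter_le_lt_of_lt hlt).ne' h)
      (not_lt.mp fun hlt => (card_filter_le_lt_of_lt hlt).ne h)
  have rank_mem (i : α) : rank i ∈ Icc 1 (Fintype.card α) :=
    mem_Icc.mpr ⟨card_pos.mpr ⟨i, by simp⟩, card_filter_le _ _⟩
  obtain ⟨i, -, hi⟩ := surjOn_of_injOn_of_card_le (s := univ) rank (fun i _ => rank_mem i)
    rank_injective.injOn (by simp) (mem_Icc.mpr ⟨hk1, hk2⟩)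
  exact ⟨i, hi, fun j hj => rank_injective (hj.trans hi.symm)⟩

end Rank

section CyclicShift

open Fin.NatCast

variable {n : ℕ} (a : Fin n → ℤ)

def psumKey (t : Fin n) : ℤ ×ₗ ℤ := toLex (psum a t, -(t : ℤ))

lemma psumKey_injective : Function.Injective (psumKey a) := fun s t h =>
  Fin.ext <| by simpa using congrArg (·.2) (toLex.injective h)

variable [NeZero n]

/-- Partial sums of the periodic extension `t ↦ a (t mod n)` of `a`. -/
def periodicPsum (t : ℕ) : ℤ := ∑ j ∈ range t, a (j : Fin n)

lemma psum_eq_periodicPsum {m : ℕ} (hm : m ≤ n) : psum a m = periodicPsum a m := by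
  have h := Fin.sum_univ_eq_sum_range (fun j => if j < m then a (j : Fin n) else 0) n
  simp only [Fin.cast_val_eq_self] at h
  rw [psum, sum_filter, h, ← sum_filter, range_eq_Ico, Ico_filter_lt, min_eq_right hm,
    ← range_eq_Ico, periodicPsum]

lemma periodicPsum_add_self (t : ℕ) :
    periodicPsum a (n + t) = ∑ i, a i + periodicPsum a t := by
  have h := Fin.sum_univ_eq_sum_range (fun j => a (j : Fin n)) n
  simp only [Fin.cast_val_eq_self] at h
  simp [periodicPsum, sum_range_add, h]

lemma psum_shift_eq (i : Fin n) {m : ℕ} (hm : m ≤ n) :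
    psum (fun j => a (j + i)) m = periodicPsum a (m + i) - periodicPsum a i := by
  rw [add_comm m, psum_eq_periodicPsum _ hm, periodicPsum, periodicPsum, periodicPsum,
    sum_range_add]
  simp [add_comm]

lemma psum_shift_nonpos_iff (ha : ∑ i, a i = 1) (i : Fin n) {m : ℕ} (hm : m < n) :
    psum (fun j => a (j + i)) m ≤ 0 ↔ psumKey a (m + i) ≤ psumKey a i := by
  have hi := i.isLt
  rw [psum_shift_eq a i hm.le, psumKey, psumKey, Prod.Lex.toLex_le_toLex, Fin.val_add,
    Fin.val_cast_of_lt hm, ← psum_eq_periodicPsum a hi.le]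
  rcases lt_or_ge (m + i) n with h | h
  · rw [Nat.mod_eq_of_lt h, ← psum_eq_periodicPsum a h.le]
    push_cast
    omega
  · obtain ⟨r, hr⟩ : ∃ r, m + i = n + r := ⟨m + i - n, by omega⟩
    rw [Nat.mod_eq_sub_mod h, Nat.mod_eq_of_lt (by omega), hr, Nat.add_sub_cancel_left,
      periodicPsum_add_self, ha, ← psum_eq_periodicPsum a (by omega)]
    push_cast
    omega

lemma card_filter_range_add (i : Fin n) (p : Fin n → Prop) [DecidablePred p] :
    #((range n).filter fun m : ℕ => p (m + i)) = #{t | p t} := by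
  rw [← Nat.Iio_eq_range, ← Fin.map_valEmbedding_univ, filter_map, card_map]
  exact card_equiv (Equiv.addRight i) (by simp)

end CyclicShift

/-- Cycle lemma: for a sequence of `n` integers summing to `1` and any `1 ≤ k ≤ n`,
exactly one cyclic shift has exactly `k` nonpositive partial sums (among the partial
sums `b_1 + ⋯ + b_m` for `0 ≤ m ≤ n-1`). -/
theorem cycle_lemma (n : ℕ) (hn : 1 ≤ n) (a : Fin n → ℤ) (ha : ∑ i, a i = 1)
    (k : ℕ) (hk1 : 1 ≤ k) (hk2 : k ≤ n) :
    ∃! i : Fin n,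
      (((Finset.range n).filter (fun m =>
        psum (fun j : Fin n => a (j + i)) m ≤ 0)).card) = k := by
  have : NeZero n := ⟨by omega⟩
  have hcount (i : Fin n) : #{m ∈ range n | psum (fun j => a (j + i)) m ≤ 0} =
      #{t | psumKey a t ≤ psumKey a i} := by
    rw [← card_filter_range_add i]
    exact congrArg card (filter_congr fun m hm => psum_shift_nonpos_iff a ha i (mem_range.mp hm))
  simpa only [hcount] using
    existsUnique_card_filter_le_eq (psumKey_injective a) hk1 (by simpa using hk2)
end

section
/- Let n ≥ 1. For each k with 1 ≤ k ≤ n, the number of paths p in 𝒫(n,1,1) with p_1 = −1 such that exactly k down steps of p start on or below the x-axis equals (1/n)·C(2n,n−1). -/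
open Finset

/-!
Cycle lemma. Let `p` have `n + 1` up and `n` down steps, so total height `1`, and let `h r` be
its height before step `r`. In the rotation of `p` starting at step `t`, the step coming from
position `r` starts at height `h r - h t` if `r ≥ t` and at `h r - h t + 1` if `r < t`. So it starts
on or below the axis iff `(h r, -r) ≤ (h t, -t)` lexicographically. For a rotation starting with
a down step `t`, the statistic is therefore the rank of `t` among the `n` down steps in this
order, and each `k ∈ [1, n]` is attained by exactly one rotation of `p`. Hence the counted set,
times the `2n + 1` rotations, is in bijection with all `C(2n+1, n+1)` paths, and
`n · C(2n+1, n+1) = (2n+1) · C(2n, n-1)`.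
-/

theorem Finset.existsUnique_card_filter_le {α β : Type*} [LinearOrder β] {e : α → β}
    (he : Function.Injective e) (D : Finset α) {k : ℕ} (hk1 : 1 ≤ k) (hk2 : k ≤ #D) :
    ∃! t, t ∈ D ∧ #{r ∈ D | e r ≤ e t} = k := by
  have hmono : ∀ {t t'}, e t < e t' → t' ∈ D →
      #{r ∈ D | e r ≤ e t} < #{r ∈ D | e r ≤ e t'} := by
    intro t t' hlt ht'
    refine card_lt_card ((ssubset_iff_of_subset fun r hr => ?_).2 ⟨t', ?_, ?_⟩)
    · simp only [mem_filter] at hr ⊢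
      exact ⟨hr.1, hr.2.trans hlt.le⟩
    · simp [ht']
    · simp [hlt]
  have hinj : ∀ t t', t ∈ D → t' ∈ D →
      #{r ∈ D | e r ≤ e t} = #{r ∈ D | e r ≤ e t'} → t = t' := by
    intro t t' ht ht' h
    refine he (by_contra fun hne => ?_)
    rcases lt_or_gt_of_ne hne with hlt | hlt
    · exact (hmono hlt ht').ne h
    · exact (hmono hlt ht).ne' h
  have hmaps : ∀ t ∈ D, #{r ∈ D | e r ≤ e t} ∈ Icc 1 #D := fun t ht =>
    mem_Icc.2 ⟨card_pos.2 ⟨t, mem_filter.2 ⟨ht, le_rfl⟩⟩, card_filter_le _ _⟩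
  obtain ⟨t, ht, hkt⟩ := surj_on_of_inj_on_of_card_le _ hmaps hinj (by simp) k
    (mem_Icc.2 ⟨hk1, hk2⟩)
  exact ⟨t, ⟨ht, hkt.symm⟩, fun t' ⟨ht', h'⟩ => hinj t' t ht' ht (h'.trans hkt)⟩

theorem Nat.card_mul_card_eq_of_existsUnique_vadd_mem {G X : Type*} [AddGroup G]
    [AddAction G X] {S T : Set X} (hS : ∀ s ∈ S, ∀ g : G, g +ᵥ s ∈ T)
    (hT : ∀ x ∈ T, ∃! g : G, g +ᵥ x ∈ S) :
    Nat.card S * Nat.card G = Nat.card T := by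
  let F : S × G → T := fun sg => ⟨sg.2 +ᵥ sg.1.1, hS _ sg.1.2 _⟩
  have hF : Function.Bijective F := by
    refine ⟨fun ⟨s, g⟩ ⟨s', g'⟩ h => ?_, fun x => ?_⟩
    · have h : g +ᵥ s.1 = g' +ᵥ s'.1 := congrArg Subtype.val h
      obtain ⟨g₀, -, huniq⟩ := hT _ (hS _ s.2 g)
      obtain rfl : g = g' := neg_injective <|
        (huniq _ (by simp [s.2])).trans (huniq _ (by simp [h, s'.2])).symm
      exact Prod.ext (Subtype.ext (vadd_left_cancel g h)) rfl
    · obtain ⟨g, hg, -⟩ := hT x.1 x.2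
      exact ⟨(⟨g +ᵥ x.1, hg⟩, -g), Subtype.ext (by simp [F])⟩
  rw [← Nat.card_prod, Nat.card_eq_of_bijective F hF]

namespace ChungFeller

def upDownPaths (α : Type*) [Fintype α] (u : ℕ) : Set (α → ℤ) :=
  {p | (∀ i, p i = 1 ∨ p i = -1) ∧ #{i | p i = 1} = u}

theorem card_upDownPaths (α : Type*) [Fintype α] (u : ℕ) :
    Nat.card (upDownPaths α u) = (Fintype.card α).choose u := by
  classical
  let e : upDownPaths α u ≃ {s : Finset α // #s = u} :=
    { toFun := fun p => ⟨({i | p.1 i = 1} : Finset α), p.2.2⟩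
      invFun := fun s => ⟨fun i => if i ∈ s.1 then 1 else -1, fun i => by
          by_cases h : i ∈ s.1 <;> simp [h], by
          convert s.2 using 2; ext i; by_cases h : i ∈ s.1 <;> simp [h]⟩
      left_inv := fun p => Subtype.ext <| funext fun i => by
        rcases p.2.1 i with h | h <;> simp [h]
      right_inv := fun s => Subtype.ext <| by ext i; by_cases h : i ∈ s.1 <;> simp [h] }
  rw [Nat.card_congr e, Nat.card_eq_fintype_card, Fintype.card_finset_len]

theorem card_filter_eq_neg_one_of_mem_upDownPaths {α : Type*} [Fintype α] {u : ℕ}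
    {p : α → ℤ} (hp : p ∈ upDownPaths α u) : #{i | p i = -1} = Fintype.card α - u := by
  have h : ({i | p i = -1} : Finset α) = ({i | ¬ p i = 1} : Finset α) :=
    filter_congr fun i _ => by rcases hp.1 i with h | h <;> simp [h]
  have := card_filter_add_card_filter_not (s := univ) fun i => p i = 1
  rw [h, ← card_univ, ← this, hp.2, Nat.add_sub_cancel_left]

theorem sum_eq_of_mem_upDownPaths {α : Type*} [Fintype α] {u : ℕ} {p : α → ℤ}
    (hp : p ∈ upDownPaths α u) : ∑ i, p i = 2 * u - Fintype.card α := by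
  have h : ∀ i, p i = 2 * (if p i = 1 then 1 else 0) - 1 := fun i => by
    rcases hp.1 i with h | h <;> simp [h]
  rw [Finset.sum_congr rfl fun i _ => h i, sum_sub_distrib, ← mul_sum, sum_boole, hp.2]
  simp

section Rotation

open Fin.NatCast

variable {N : ℕ} [NeZero N]

/- `DomAddAct.mk t +ᵥ p` is the rotation `i ↦ p (t + i)`, and `height p` is the height function
of the periodic extension of `p`, defined for all `m : ℕ`. -/

def height (p : Fin N → ℤ) (m : ℕ) : ℤ := ∑ i ∈ range m, p (i : Fin N)

theorem psum_eq_height (p : Fin N → ℤ) {m : ℕ} (hm : m ≤ N) : psum p m = height p m := by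
  have h := Fin.sum_univ_eq_sum_range (fun i => if i < m then p (i : Fin N) else 0) N
  simp only [Fin.cast_val_eq_self, ← sum_filter] at h
  rw [psum, h, height]
  congr 1
  ext i
  simp only [mem_filter, mem_range]
  omega

theorem height_period_add (p : Fin N → ℤ) (m : ℕ) :
    height p (N + m) = height p N + height p m := by
  simp [height, sum_range_add]

theorem psum_vadd (p : Fin N → ℤ) (t : Fin N) {m : ℕ} (hm : m ≤ N) :
    psum (DomAddAct.mk t +ᵥ p) m = height p (t + m) - height p t := by
  simp [psum_eq_height _ hm, height, sum_range_add, DomAddAct.vadd_apply]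

def heightKey (p : Fin N → ℤ) (r : Fin N) : ℤ ×ₗ ℤ := toLex (height p r, -(r : ℤ))

theorem heightKey_injective (p : Fin N → ℤ) : Function.Injective (heightKey p) := by
  intro r s h
  have h2 := congrArg (fun x => (ofLex x).2) h
  simp only [heightKey, ofLex_toLex, neg_inj, Nat.cast_inj] at h2
  exact Fin.ext h2

theorem psum_vadd_nonpos_iff {p : Fin N → ℤ} (hN : height p N = 1) (t i : Fin N) :
    psum (DomAddAct.mk t +ᵥ p) i ≤ 0 ↔ heightKey p (t + i) ≤ heightKey p t := by
  rw [psum_vadd p t i.isLt.le, heightKey, heightKey, Prod.Lex.toLex_le_toLex]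
  rcases lt_or_ge ((t : ℕ) + i) N with h | h
  · rw [Fin.val_add_eq_of_add_lt h]
    omega
  · have hwrap : (t : ℕ) + i = N + (t + i : Fin N) := by
      rw [Fin.val_add, Nat.mod_eq_sub_mod h, Nat.mod_eq_of_lt (by omega)]
      omega
    rw [hwrap, height_period_add, hN]
    omega

theorem card_filter_vadd {p : Fin N → ℤ} (hN : height p N = 1) (t : Fin N) :
    #{i | (DomAddAct.mk t +ᵥ p) i = -1 ∧ psum (DomAddAct.mk t +ᵥ p) i ≤ 0}
      = #{r | p r = -1 ∧ heightKey p r ≤ heightKey p t} :=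
  card_equiv (Equiv.addLeft t) fun i => by
    simp [DomAddAct.vadd_apply, psum_vadd_nonpos_iff hN]

theorem height_eq_sum (p : Fin N → ℤ) : height p N = ∑ i, p i := by
  rw [height]
  simpa using (Fin.sum_univ_eq_sum_range (fun i => p (i : Fin N)) N).symm

theorem vadd_mem_upDownPaths {u : ℕ} {p : Fin N → ℤ} (hp : p ∈ upDownPaths (Fin N) u)
    (t : Fin N) : DomAddAct.mk t +ᵥ p ∈ upDownPaths (Fin N) u :=
  ⟨fun i => hp.1 _, by
    rw [← hp.2]
    exact card_equiv (Equiv.addLeft t) fun i => by simp [DomAddAct.vadd_apply]⟩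

end Rotation

def downFirstPaths (n k : ℕ) : Set (Fin (2*n+1) → ℤ) :=
  {p | (∀ i, p i = 1 ∨ p i = -1) ∧ #{i | p i = 1} = n + 1 ∧ p ⟨0, Nat.succ_pos _⟩ = -1 ∧
    #{i | p i = -1 ∧ psum p i ≤ 0} = k}

theorem vadd_mem_downFirstPaths_iff {n k : ℕ} {p : Fin (2*n+1) → ℤ}
    (hp : p ∈ upDownPaths (Fin (2*n+1)) (n+1)) (t : Fin (2*n+1)) :
    DomAddAct.mk t +ᵥ p ∈ downFirstPaths n k ↔
      p t = -1 ∧ #{r | p r = -1 ∧ heightKey p r ≤ heightKey p t} = k := by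
  have hN : height p (2*n+1) = 1 := by
    rw [height_eq_sum, sum_eq_of_mem_upDownPaths hp, Fintype.card_fin]
    push_cast
    ring
  have hstart : (DomAddAct.mk t +ᵥ p) ⟨0, Nat.succ_pos _⟩ = p t := by
    simp [DomAddAct.vadd_apply]
  rw [downFirstPaths, Set.mem_ofPred_eq, ← and_assoc, hstart, card_filter_vadd hN]
  exact and_iff_right (vadd_mem_upDownPaths hp t)

theorem existsUnique_vadd_mem_downFirstPaths {n k : ℕ} {p : Fin (2*n+1) → ℤ}
    (hp : p ∈ upDownPaths (Fin (2*n+1)) (n+1)) (hk1 : 1 ≤ k) (hk2 : k ≤ n) :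
    ∃! t : Fin (2*n+1), DomAddAct.mk t +ᵥ p ∈ downFirstPaths n k := by
  have hdowns : #{r | p r = -1} = n := by
    rw [card_filter_eq_neg_one_of_mem_upDownPaths hp, Fintype.card_fin]
    omega
  simp_rw [vadd_mem_downFirstPaths_iff hp]
  obtain ⟨t, ⟨ht, htk⟩, huniq⟩ :=
    existsUnique_card_filter_le (heightKey_injective p) {r | p r = -1} hk1 (hk2.trans hdowns.ge)
  rw [filter_filter] at htk
  refine ⟨t, ⟨(mem_filter.1 ht).2, htk⟩, fun t' ⟨ht', htk'⟩ => huniq t' ⟨?_, ?_⟩⟩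
  · simpa using ht'
  · rwa [filter_filter]

theorem card_downFirstPaths_mul_eq_choose (n : ℕ) {k : ℕ} (hk1 : 1 ≤ k) (hk2 : k ≤ n) :
    Nat.card (downFirstPaths n k) * (2*n+1) = (2*n+1).choose (n+1) := by
  have h := Nat.card_mul_card_eq_of_existsUnique_vadd_mem (G := (Fin (2*n+1))ᵈᵃᵃ)
    (S := downFirstPaths n k) (T := upDownPaths (Fin (2*n+1)) (n+1))
    (fun s hs g => vadd_mem_upDownPaths ⟨hs.1, hs.2.1⟩ (DomAddAct.mk.symm g))
    (fun p hp => by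
      simpa only [Equiv.apply_symm_apply] using
        DomAddAct.mk.existsUnique_congr_left.1 (existsUnique_vadd_mem_downFirstPaths hp hk1 hk2))
  rwa [Nat.card_congr DomAddAct.mk.symm, Nat.card_fin, card_upDownPaths,
    Fintype.card_fin] at h

end ChungFeller

theorem catalan_chung_feller_down_general (n k : ℕ) (hk1 : 1 ≤ k) (hk2 : k ≤ n) :
    Nat.card {p : Fin (2*n+1) → ℤ //
      (∀ i, p i = 1 ∨ p i = -1) ∧
      (univ.filter (fun i => p i = 1)).card = n + 1 ∧
      p ⟨0, Nat.succ_pos _⟩ = -1 ∧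
      (univ.filter (fun i : Fin (2*n+1) => p i = -1 ∧ psum p (i : ℕ) ≤ 0)).card = k }
      * n = Nat.choose (2*n) (n-1) := by
  change Nat.card (ChungFeller.downFirstPaths n k) * n = _
  obtain ⟨m, rfl⟩ : ∃ m, n = m + 1 := ⟨n - 1, by omega⟩
  refine Nat.eq_of_mul_eq_mul_left (Nat.succ_pos (2*(m+1))) ?_
  calc (2*(m+1)+1) * (Nat.card (ChungFeller.downFirstPaths (m+1) k) * (m+1))
      = (2*(m+1)+1).choose (m+1+1) * (m+1) := by
        rw [← ChungFeller.card_downFirstPaths_mul_eq_choose (m+1) hk1 hk2]; ring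
    _ = (2*(m+1)+1) * (2*(m+1)).choose m := by
        rw [Nat.choose_symm_half, Nat.add_one_mul_choose_eq]

/-- Among paths in 𝒫(n,1,1) (steps ±1, with n+1 up steps and n down steps) starting
with a down step, for each `1 ≤ k ≤ n` the number with exactly `k` down steps
starting on or below the x-axis is `(1/n)·C(2n,n-1)`. -/
theorem catalan_chung_feller_down (n k : ℕ) (hn : 1 ≤ n) (hk1 : 1 ≤ k) (hk2 : k ≤ n) :
    Nat.card {p : Fin (2*n+1) → ℤ //
      (∀ i, p i = 1 ∨ p i = -1) ∧
      (univ.filter (fun i => p i = 1)).card = n + 1 ∧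
      p ⟨0, Nat.succ_pos _⟩ = -1 ∧
      (univ.filter (fun i : Fin (2*n+1) => p i = -1 ∧ psum p (i : ℕ) ≤ 0)).card = k }
      * n = Nat.choose (2*n) (n-1) :=
  catalan_chung_feller_down_general n k hk1 hk2
end

section
/- Let n ≥ 0. For each k with 1 ≤ k ≤ 2n+1, the number of paths p in 𝒫(n,1,1) such that exactly k of the vertices s_0, s_1, …, s_{2n} satisfy s_i ≤ 0 equals (1/(2n+1))·C(2n+1,n). -/
open Finset

/-!
Cycle lemma. Since the steps of `p` sum to `1`, its heights extend to `T = cyclicPsum p` on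
all of `ℕ` with `T (m + N) = T m + 1`. The rotation of `p` starting at `c` has its vertex `m`
on or below the axis iff `T (c + m) ≤ T c`; folding `c + m` back into `[0, N)` and using
integrality, the number of such `m` is the number of `i` with `(T i, -i) ≤ (T c, -c)`
lexicographically, i.e. the rank of `c` in a linear order on the `N` positions. Hence among the
`N` rotations of a path each count `1, …, N` occurs exactly once, and rotation is a free action
of `Fin (2n+1)` on the `C(2n+1, n+1)` paths whose orbits meet the paths with count `k` exactly
once.
-/

section Rank

variable {ι α : Type*} [Fintype ι] [LinearOrder α]

theorem card_filter_le_apply_lt_of_lt {f : ι → α} {c c' : ι} (h : f c < f c') :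
    #{i | f i ≤ f c} < #{i | f i ≤ f c'} :=
  card_lt_card <| (ssubset_iff_of_subset fun i hi => by
    simp only [mem_filter, mem_univ, true_and] at hi ⊢; exact hi.trans h.le).2
    ⟨c', by simp, by simpa using h⟩

theorem existsUnique_card_filter_le_apply_eq {f : ι → α} (hf : Function.Injective f) {k : ℕ}
    (hk1 : 1 ≤ k) (hk2 : k ≤ Fintype.card ι) : ∃! c, #{i | f i ≤ f c} = k := by
  set r : ι → ℕ := fun c => #{i | f i ≤ f c}
  have hr : Function.Injective r := by
    intro c c' h
    by_contra hne
    rcases lt_or_gt_of_ne (hf.ne hne) with hlt | hlt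
    · exact (card_filter_le_apply_lt_of_lt hlt).ne h
    · exact (card_filter_le_apply_lt_of_lt hlt).ne' h
  have hrange : univ.image r = Icc 1 (Fintype.card ι) := by
    refine eq_of_subset_of_card_le
      (image_subset_iff.2 fun c _ => mem_Icc.2 ⟨card_pos.2 ⟨c, by simp⟩, card_le_univ _⟩)
      (by simp [card_image_of_injective _ hr])
  obtain ⟨c, -, rfl⟩ := mem_image.1 (hrange ▸ mem_Icc.2 ⟨hk1, hk2⟩)
  exact ⟨c, rfl, fun c' h => hr h⟩

end Rank

theorem Nat.card_eq_card_fiber_mul_card_of_existsUnique_vadd {G α β : Type*} [AddGroup G]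
    [AddAction G α] (f : α → β) (b : β) (h : ∀ a, ∃! g : G, f (g +ᵥ a) = b) :
    Nat.card α = Nat.card {a // f a = b} * Nat.card G := by
  rw [← Nat.card_prod]
  refine (Nat.card_congr (Equiv.ofBijective (fun x => x.2 +ᵥ x.1.1) ⟨?_, ?_⟩)).symm
  · rintro ⟨⟨a, ha⟩, g⟩ ⟨⟨a', ha'⟩, g'⟩ (heq : g +ᵥ a = g' +ᵥ a')
    have ha_eq : a = (-g + g') +ᵥ a' := by rw [add_vadd, ← heq, neg_vadd_vadd]
    have hg : -g + g' = 0 := (h a').unique (ha_eq ▸ ha) (by rwa [zero_vadd])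
    obtain rfl : g = g' := neg_add_eq_zero.1 hg
    rw [hg, zero_vadd] at ha_eq
    subst ha_eq
    rfl
  · intro a
    obtain ⟨g, hg, -⟩ := h a
    exact ⟨(⟨g +ᵥ a, hg⟩, -g), neg_vadd_vadd g a⟩

section UpDownPaths

variable {N : ℕ}

def upDownPaths (N u : ℕ) : Set (Fin N → ℤ) :=
  {p | (∀ i, p i = 1 ∨ p i = -1) ∧ #{i | p i = 1} = u}

theorem sum_eq_of_mem_upDownPaths {u : ℕ} {p : Fin N → ℤ} (hp : p ∈ upDownPaths N u) :
    ∑ i, p i = 2 * u - N := by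
  calc ∑ i, p i = ∑ i, (2 * (if p i = 1 then 1 else 0) - 1 : ℤ) :=
        sum_congr rfl fun i _ => by rcases hp.1 i with h | h <;> simp [h]
    _ = 2 * u - N := by rw [sum_sub_distrib, ← mul_sum, sum_boole, hp.2]; simp

def upDownPathsEquivFinset (N u : ℕ) : upDownPaths N u ≃ {s : Finset (Fin N) // #s = u} where
  toFun p := ⟨univ.filter fun i => p.1 i = 1, p.2.2⟩
  invFun s := ⟨fun i => if i ∈ s.1 then 1 else -1,
    fun i => by by_cases h : i ∈ s.1 <;> simp [h], by simpa using s.2⟩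
  left_inv p := Subtype.ext <| funext fun i => by
    rcases p.2.1 i with h | h <;> simp [h]
  right_inv s := Subtype.ext <| by ext i; simp

theorem Nat.card_upDownPaths (N u : ℕ) : Nat.card (upDownPaths N u) = N.choose u := by
  rw [Nat.card_congr (upDownPathsEquivFinset N u), Nat.card_eq_fintype_card,
    Fintype.card_finset_len, Fintype.card_fin]

end UpDownPaths

section Rotation

open Fin.NatCast

variable {N : ℕ} [NeZero N] {β : Type*}

def rotate (c : Fin N) (p : Fin N → β) : Fin N → β := fun i => p (i + c)

theorem rotate_zero (p : Fin N → β) : rotate 0 p = p :=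
  funext fun i => by simp [rotate]

theorem rotate_add (c d : Fin N) (p : Fin N → β) :
    rotate (c + d) p = rotate c (rotate d p) :=
  funext fun i => by simp [rotate, add_assoc]

theorem card_filter_rotate (P : β → Prop) [DecidablePred P] (c : Fin N) (p : Fin N → β) :
    #{i | P (rotate c p i)} = #{i | P (p i)} := by
  simp only [card_filter]
  exact Equiv.sum_comp (Equiv.addRight c) fun i => if P (p i) then 1 else 0

theorem rotate_mem_upDownPaths {u : ℕ} {p : Fin N → ℤ} (hp : p ∈ upDownPaths N u)
    (c : Fin N) : rotate c p ∈ upDownPaths N u :=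
  ⟨fun i => hp.1 (i + c), (card_filter_rotate (· = 1) c p).trans hp.2⟩

instance (u : ℕ) : AddAction (Fin N) (upDownPaths N u) where
  vadd c p := ⟨rotate c p, rotate_mem_upDownPaths p.2 c⟩
  zero_vadd p := Subtype.ext (rotate_zero p.1)
  add_vadd c d p := Subtype.ext (rotate_add c d p.1)

def cyclicPsum (p : Fin N → ℤ) (m : ℕ) : ℤ := ∑ j ∈ range m, p (j : Fin N)

def nonposHeightCount (p : Fin N → ℤ) : ℕ := #{m ∈ range N | psum p m ≤ 0}

theorem psum_eq_cyclicPsum (p : Fin N → ℤ) {m : ℕ} (hm : m ≤ N) :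
    psum p m = cyclicPsum p m := by
  calc psum p m = ∑ i : Fin N, if (i : ℕ) < m then p ((i : ℕ) : Fin N) else 0 := by
        simp [psum, sum_filter]
    _ = ∑ j ∈ range N, if j < m then p (j : Fin N) else 0 :=
        Fin.sum_univ_eq_sum_range (fun j => if j < m then p (j : Fin N) else 0) N
    _ = cyclicPsum p m := by
        rw [← sum_filter, cyclicPsum]
        congr 1
        ext j
        simp only [mem_filter, mem_range]
        omega

theorem cyclicPsum_add_self (p : Fin N → ℤ) (m : ℕ) :
    cyclicPsum p (m + N) = cyclicPsum p m + ∑ i, p i := by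
  rw [cyclicPsum, cyclicPsum, sum_range_add,
    ← Fin.sum_univ_eq_sum_range (fun j => p ((m + j : ℕ) : Fin N)),
    ← Equiv.sum_comp (Equiv.addLeft (m : Fin N)) p]
  simp

theorem psum_rotate (p : Fin N → ℤ) (c : Fin N) {m : ℕ} (hm : m ≤ N) :
    psum (rotate c p) m = cyclicPsum p (c + m) - cyclicPsum p c := by
  simp only [psum_eq_cyclicPsum _ hm, cyclicPsum, sum_range_add, add_sub_cancel_left]
  simp [rotate, add_comm]

/-- `nonposHeightCount (rotate c p)` is the rank of `c` for this key: height first, ties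
broken in favour of the later position. -/
def heightKey (p : Fin N → ℤ) (i : Fin N) : Lex (ℤ × (Fin N)ᵒᵈ) :=
  toLex (cyclicPsum p i, OrderDual.toDual i)

theorem heightKey_injective (p : Fin N → ℤ) : Function.Injective (heightKey p) :=
  fun i j h => by simpa [heightKey] using congrArg (fun x => (ofLex x).2) h

variable {p : Fin N → ℤ}

theorem psum_rotate_sub_nonpos_iff (hp : ∑ i, p i = 1) (c i : Fin N) :
    psum (rotate c p) (i - c : Fin N) ≤ 0 ↔ heightKey p i ≤ heightKey p c := by
  rw [psum_rotate _ _ (i - c).isLt.le, heightKey, heightKey, Prod.Lex.le_iff]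
  simp only [ofLex_toLex, OrderDual.toDual_le_toDual]
  rcases le_or_gt c i with hci | hic
  · rw [Fin.coe_sub_iff_le.2 hci, Nat.add_sub_cancel' hci]
    omega
  · rw [Fin.coe_sub_iff_lt.2 hic, show (c : ℕ) + (N + i - c) = i + N by omega,
      cyclicPsum_add_self, hp]
    omega

theorem nonposHeightCount_rotate (hp : ∑ i, p i = 1) (c : Fin N) :
    nonposHeightCount (rotate c p) = #{i | heightKey p i ≤ heightKey p c} := by
  rw [nonposHeightCount, card_filter,
    ← Fin.sum_univ_eq_sum_range (fun m => if psum (rotate c p) m ≤ 0 then 1 else 0),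
    ← Equiv.sum_comp (Equiv.subRight c), ← card_filter]
  exact congrArg card (filter_congr fun i _ => psum_rotate_sub_nonpos_iff hp c i)

theorem existsUnique_nonposHeightCount_rotate_eq (hp : ∑ i, p i = 1) {k : ℕ} (hk1 : 1 ≤ k)
    (hk2 : k ≤ N) : ∃! c : Fin N, nonposHeightCount (rotate c p) = k := by
  simp only [nonposHeightCount_rotate hp]
  exact existsUnique_card_filter_le_apply_eq (heightKey_injective p) hk1 (by simpa using hk2)

end Rotation

/-- Among paths in 𝒫(n,1,1), for each `1 ≤ k ≤ 2n+1` the number of paths with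
exactly `k` of the vertices `s_0, …, s_{2n}` on or below the x-axis is
`(1/(2n+1))·C(2n+1,n)`. -/
theorem catalan_chung_feller_vertices (n k : ℕ) (hk1 : 1 ≤ k) (hk2 : k ≤ 2*n + 1) :
    Nat.card {p : Fin (2*n+1) → ℤ //
      (∀ i, p i = 1 ∨ p i = -1) ∧
      (univ.filter (fun i => p i = 1)).card = n + 1 ∧
      (((Finset.range (2*n+1)).filter (fun m => psum p m ≤ 0)).card = k) }
      * (2*n + 1) = Nat.choose (2*n+1) n := by
  have hsum (p : upDownPaths (2*n+1) (n+1)) : ∑ i, p.1 i = 1 := by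
    rw [sum_eq_of_mem_upDownPaths p.2]; push_cast; ring
  have hcount := Nat.card_eq_card_fiber_mul_card_of_existsUnique_vadd (G := Fin (2*n+1))
    (fun p : upDownPaths (2*n+1) (n+1) => nonposHeightCount p.1) k
    fun p => existsUnique_nonposHeightCount_rotate_eq (hsum p) hk1 hk2
  rw [Nat.card_upDownPaths, Nat.choose_symm_half, Nat.card_fin] at hcount
  rw [hcount]
  congr 1
  exact Nat.card_congr <| (Equiv.subtypeEquivRight fun _ => and_assoc.symm).trans
    (Equiv.subtypeSubtypeEquivSubtypeInter (· ∈ upDownPaths (2*n+1) (n+1))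
      fun p => nonposHeightCount p = k).symm
end

section
/- Let n ≥ 1 and k ≥ 2. For each j with 1 ≤ j ≤ k−1, the number of paths p in 𝒫(n−1,1,2) with p_1 = −1 that have exactly k−1 down steps in even positions, of which exactly j start on or below the x-axis, equals (1/(k−1))·C(n,k)·C(n−1,k−2); in particular this count is independent of j and equals the Narayana number N(n,k). -/
open Finset

/-!
Rotate a path cyclically so that it starts at one of its even-position down steps `d`. The result
again ends at height 2 and starts with a down step, and since `d` and the length are even it has
the same number `k - 1` of even down steps. The step that came from position `e` now starts at
height `s_e - s_d` if `e ≥ d`, and at `2 + s_e - s_d` if it wrapped around; heights at even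
positions are even, so it starts on or below the axis iff `s_e < s_d`, or `s_e = s_d` and `e ≥ d`.
Hence the number of even down steps of the rotated path that start on or below the axis is the
rank of `d` among the even down steps in this order, and each value in `[1, k - 1]` is attained by
exactly one rotation. So rotation is a bijection from pairs (path with value `j`, even down step)
onto the whole family, whose size `C(n - 1, k - 2) * C(n, k)` counts the choices of the even down
steps besides position `0` and of the `n - k` odd down steps.
-/

open Function

namespace Finset

variable {α : Type*}

theorem existsUnique_card_filter_le_s12 {β : Type*} [LinearOrder β] {f : α → β} (hf : Injective f)
    {s : Finset α} {j : ℕ} (hj1 : 1 ≤ j) (hj2 : j ≤ #s) :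
    ∃! a, a ∈ s ∧ #{b ∈ s | f b ≤ f a} = j := by
  set rank := fun a => #{b ∈ s | f b ≤ f a}
  have rank_lt : ∀ a ∈ s, ∀ a' ∈ s, f a < f a' → rank a < rank a' := by
    intro a _ a' ha' hlt
    refine card_lt_card ⟨monotone_filter_right _ fun b _ hb => hb.trans hlt.le, fun h => ?_⟩
    exact (mem_filter.1 (h (mem_filter.2 ⟨ha', le_rfl⟩))).2.not_gt hlt
  have rank_injOn : Set.InjOn rank s := by
    intro a ha a' ha' h
    by_contra hne
    rcases (hf.ne hne).lt_or_gt with hlt | hlt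
    · exact (rank_lt a ha a' ha' hlt).ne h
    · exact (rank_lt a' ha' a ha hlt).ne h.symm
  have image_rank : s.image rank = Icc 1 #s := by
    refine eq_of_subset_of_card_le (fun r hr => ?_) (by simp [card_image_of_injOn rank_injOn])
    obtain ⟨a, ha, rfl⟩ := mem_image.1 hr
    exact mem_Icc.2 ⟨card_pos.2 ⟨a, mem_filter.2 ⟨ha, le_rfl⟩⟩, card_filter_le _ _⟩
  obtain ⟨a, ha, rfl⟩ := mem_image.1 (image_rank ▸ mem_Icc.2 ⟨hj1, hj2⟩)
  exact ⟨a, ⟨ha, rfl⟩, fun a' ⟨ha', h⟩ => rank_injOn ha' ha h⟩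

variable [DecidableEq α]

theorem card_powerset_filter_mem_and_card {s : Finset α} {a : α} (ha : a ∈ s) (r : ℕ) :
    #{X ∈ s.powerset | a ∈ X ∧ #X = r + 1} = (#s - 1).choose r := by
  rw [← card_erase_of_mem ha, ← card_powersetCard]
  refine card_nbij' (fun X => X.erase a) (insert a) (fun X hX => ?_) (fun X hX => ?_)
    (fun X hX => ?_) (fun X hX => ?_)
  · simp only [mem_coe, mem_filter, mem_powerset, mem_powersetCard] at hX ⊢
    exact ⟨erase_subset_erase a hX.1,
      by rw [card_erase_of_mem hX.2.1, hX.2.2, Nat.add_sub_cancel]⟩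
  · simp only [mem_coe, mem_filter, mem_powerset, mem_powersetCard] at hX ⊢
    have ha' : a ∉ X := fun h => by simpa using hX.1 h
    exact ⟨insert_subset ha (hX.1.trans (erase_subset a s)), mem_insert_self a X,
      by rw [card_insert_of_notMem ha', hX.2]⟩
  · simp only [mem_coe, mem_filter, mem_powerset] at hX
    exact insert_erase hX.2.1
  · simp only [mem_coe, mem_powersetCard] at hX
    exact erase_insert fun h => by simpa using hX.1 h

theorem card_filter_and_filter_not [Fintype α] (P : α → Prop) [DecidablePred P]
    (Q R : Finset α → Prop) [DecidablePred Q] [DecidablePred R] :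
    #{D : Finset α | Q {a ∈ D | P a} ∧ R {a ∈ D | ¬P a}} =
      #{X ∈ (univ.filter P).powerset | Q X} * #{Y ∈ (univ.filter (¬P ·)).powerset | R Y} := by
  have filter_union {X Y : Finset α} (hX : X ⊆ univ.filter P) (hY : Y ⊆ univ.filter (¬P ·)) :
      {a ∈ X ∪ Y | P a} = X ∧ {a ∈ X ∪ Y | ¬P a} = Y := by
    simp only [subset_iff, mem_filter, mem_univ, true_and] at hX hY
    constructor <;> ext a <;> simp only [mem_filter, mem_union] <;> grind
  rw [← card_product]
  refine card_nbij' (fun D => ({a ∈ D | P a}, {a ∈ D | ¬P a})) (fun XY => XY.1 ∪ XY.2)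
    (fun D hD => ?_) (fun XY hXY => ?_) (fun D _ => filter_union_filter_not_eq _ _)
    (fun XY hXY => ?_)
  · simp only [mem_coe, mem_filter, mem_univ, true_and, mem_product, mem_powerset] at hD ⊢
    exact ⟨⟨monotone_filter_left _ (subset_univ D), hD.1⟩,
      monotone_filter_left _ (subset_univ D), hD.2⟩
  · simp only [mem_coe, mem_filter, mem_univ, true_and, mem_product, mem_powerset] at hXY ⊢
    rw [(filter_union hXY.1.1 hXY.2.1).1, (filter_union hXY.1.1 hXY.2.1).2]
    exact ⟨hXY.1.2, hXY.2.2⟩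
  · simp only [mem_coe, mem_filter, mem_product, mem_powerset] at hXY
    simp only [filter_union hXY.1.1 hXY.2.1, Prod.mk.eta]

end Finset

theorem Fin.card_filter_val_mod_two_eq_zero (n : ℕ) :
    #{m : Fin (2 * n) | (m : ℕ) % 2 = 0} = n := by
  refine (card_nbij' (fun m => ⟨m / 2, by omega⟩) (fun i => ⟨2 * i, by omega⟩)
    (fun m _ => by simp) (fun i _ => ?_) (fun m hm => ?_) (fun i _ => ?_)).trans (card_fin n)
  · simp only [mem_coe, mem_filter, mem_univ, true_and]
    omega
  · simp only [mem_coe, mem_filter, mem_univ, true_and] at hm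
    ext
    simp only
    omega
  · ext
    simp

theorem Fin.card_filter_val_mod_two_ne_zero (n : ℕ) :
    #{m : Fin (2 * n) | ¬(m : ℕ) % 2 = 0} = n := by
  have := card_filter_add_card_filter_not (s := univ) fun m : Fin (2 * n) => (m : ℕ) % 2 = 0
  rw [Fin.card_filter_val_mod_two_eq_zero, card_univ, Fintype.card_fin] at this
  omega

namespace LatticePath

variable {N : ℕ}

section Height

variable (p : Fin N → ℤ)

theorem psum_succ {m : ℕ} (hm : m < N) : psum p (m + 1) = psum p m + p ⟨m, hm⟩ := by
  have : (univ.filter fun j : Fin N => (j : ℕ) < m + 1) =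
      insert ⟨m, hm⟩ (univ.filter fun j : Fin N => (j : ℕ) < m) := by
    ext j
    simp only [mem_insert, mem_filter, mem_univ, true_and, Fin.ext_iff]
    omega
  rw [psum, psum, this, sum_insert (by simp), add_comm]

theorem psum_self : psum p N = ∑ m, p m := by
  simp [psum, filter_true_of_mem]

variable {p}

theorem psum_emod_two (hp : ∀ m, p m = 1 ∨ p m = -1) {m : ℕ} (hm : m ≤ N) :
    psum p m % 2 = m % 2 := by
  induction m with
  | zero => simp [psum]
  | succ m ih =>
    rw [psum_succ p hm]
    have := ih (by omega)
    rcases hp ⟨m, hm⟩ with h | h <;> rw [h] <;> omega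

theorem psum_self_of_sign (hp : ∀ m, p m = 1 ∨ p m = -1) :
    psum p N = 2 * #{m | p m = 1} - N := by
  have hsign : ∀ m, p m = 2 * (if p m = 1 then 1 else 0) - 1 := by
    intro m
    rcases hp m with h | h <;> simp [h]
  rw [psum_self, sum_congr rfl fun m _ => hsign m, sum_sub_distrib, ← mul_sum, sum_boole]
  simp

end Height

section Encoding

def signPaths (N : ℕ) : Finset (Fin N → ℤ) :=
  Fintype.piFinset fun _ => {1, -1}

theorem mem_signPaths {p : Fin N → ℤ} : p ∈ signPaths N ↔ ∀ m, p m = 1 ∨ p m = -1 := by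
  simp [signPaths]

def downSteps (p : Fin N → ℤ) : Finset (Fin N) := {m | p m = -1}

def ofDownSteps (D : Finset (Fin N)) : Fin N → ℤ := fun m => if m ∈ D then -1 else 1

theorem ofDownSteps_eq_neg_one_iff {D : Finset (Fin N)} {m : Fin N} :
    ofDownSteps D m = -1 ↔ m ∈ D := by
  by_cases h : m ∈ D <;> simp [ofDownSteps, h]

theorem ofDownSteps_downSteps {p : Fin N → ℤ} (hp : p ∈ signPaths N) :
    ofDownSteps (downSteps p) = p := by
  funext m
  rcases mem_signPaths.1 hp m with h | h <;> simp [ofDownSteps, downSteps, h]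

theorem downSteps_ofDownSteps (D : Finset (Fin N)) : downSteps (ofDownSteps D) = D := by
  ext m
  simp [ofDownSteps, downSteps]

theorem ofDownSteps_mem_signPaths (D : Finset (Fin N)) : ofDownSteps D ∈ signPaths N := by
  simp only [mem_signPaths, ofDownSteps]
  intro m
  split_ifs <;> simp

theorem card_filter_signPaths (P : (Fin N → ℤ) → Prop) [DecidablePred P] :
    #{p ∈ signPaths N | P p} = #{D : Finset (Fin N) | P (ofDownSteps D)} := by
  refine card_nbij' downSteps ofDownSteps (fun p hp => ?_) (fun D hD => ?_)
    (fun p hp => ofDownSteps_downSteps (mem_filter.1 hp).1) (fun D _ => downSteps_ofDownSteps D)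
  · simpa [ofDownSteps_downSteps (mem_filter.1 hp).1] using (mem_filter.1 hp).2
  · simpa [ofDownSteps_mem_signPaths] using hD

theorem sum_ofDownSteps (D : Finset (Fin N)) : ∑ m, ofDownSteps D m = N - 2 * #D := by
  have hD : #D ≤ N := by simpa using card_le_univ D
  simp [ofDownSteps, sum_ite, filter_notMem_eq_sdiff, ← compl_eq_univ_sdiff, card_compl,
    Nat.cast_sub hD]
  ring

end Encoding

def rotate (d : Fin N) (p : Fin N → ℤ) : Fin N → ℤ := fun m => p (m + d)

section Rotate

-- The cast `ℕ → Fin N` reduces mod `N`: `fun i : ℕ => p i` is the periodic extension of `p`.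
open Fin.NatCast

variable [NeZero N] (p : Fin N → ℤ)

theorem psum_eq_sum_range {m : ℕ} (hm : m ≤ N) :
    psum p m = ∑ i ∈ range m, p (i : Fin N) := by
  induction m with
  | zero => simp [psum]
  | succ m ih =>
    rw [psum_succ p hm, ih (by omega), sum_range_succ]
    congr 2
    ext
    simp [Nat.mod_eq_of_lt (Nat.lt_of_succ_le hm)]

theorem rotate_neg_rotate (d : Fin N) : rotate (-d) (rotate d p) = p := by
  funext m
  simp [rotate]

theorem sum_range_period_add (r : ℕ) :
    ∑ i ∈ range (N + r), p (i : Fin N) =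
      ∑ i ∈ range N, p (i : Fin N) + ∑ i ∈ range r, p (i : Fin N) := by
  simp [sum_range_add]

theorem psum_rotate (d : Fin N) {m : ℕ} (hm : m ≤ N) :
    psum (rotate d p) m = ∑ i ∈ range (d + m), p (i : Fin N) - psum p d := by
  rw [psum_eq_sum_range _ hm, psum_eq_sum_range _ d.is_lt.le, sum_range_add]
  simp [rotate, add_comm]

theorem psum_rotate_self (d : Fin N) : psum (rotate d p) N = psum p N := by
  rw [psum_rotate p d le_rfl, add_comm, sum_range_period_add, ← psum_eq_sum_range p le_rfl,
    ← psum_eq_sum_range p d.is_lt.le, add_sub_cancel_right]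

end Rotate

section EvenDownSteps

def evenDownSteps (p : Fin N → ℤ) : Finset (Fin N) :=
  {m | p m = -1 ∧ (m : ℕ) % 2 = 0}

def lowEvenDownSteps (p : Fin N → ℤ) : Finset (Fin N) :=
  {m | p m = -1 ∧ (m : ℕ) % 2 = 0 ∧ psum p m ≤ 0}

theorem lowEvenDownSteps_eq_filter (p : Fin N → ℤ) :
    lowEvenDownSteps p = (evenDownSteps p).filter fun m : Fin N => psum p m ≤ 0 := by
  ext m
  simp [lowEvenDownSteps, evenDownSteps, and_assoc]

theorem evenDownSteps_ofDownSteps (D : Finset (Fin N)) :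
    evenDownSteps (ofDownSteps D) = D.filter fun m : Fin N => (m : ℕ) % 2 = 0 := by
  ext m
  simp [evenDownSteps, ofDownSteps]

/-- Among steps at equal height, the later one comes first: after rotating the path to start
at `d`, a step `e ≥ d` at the height of `d` starts on the axis, one that wrapped around does
not. -/
def heightKey (p : Fin N → ℤ) (e : Fin N) : ℤ ×ₗ ℤ := toLex (psum p e, -(e : ℤ))

theorem heightKey_injective (p : Fin N → ℤ) : Injective (heightKey p) := by
  intro e e' h
  have := congrArg (fun x => (ofLex x).2) h
  simp only [heightKey, ofLex_toLex, neg_inj, Nat.cast_inj] at this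
  exact Fin.ext this

def heightRank (p : Fin N → ℤ) (d : Fin N) : ℕ :=
  #{e ∈ evenDownSteps p | heightKey p e ≤ heightKey p d}

variable {p : Fin N → ℤ} {d : Fin N}

theorem mem_evenDownSteps_rotate (hN : 2 ∣ N) (hd : (d : ℕ) % 2 = 0) (m : Fin N) :
    m ∈ evenDownSteps (rotate d p) ↔ m + d ∈ evenDownSteps p := by
  rw [evenDownSteps, evenDownSteps, mem_filter, mem_filter]
  simp only [mem_univ, true_and, rotate, Fin.val_add, Nat.mod_mod_of_dvd _ hN]
  omega

variable [NeZero N]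

theorem card_evenDownSteps_rotate (hN : 2 ∣ N) (hd : (d : ℕ) % 2 = 0) :
    #(evenDownSteps (rotate d p)) = #(evenDownSteps p) :=
  card_equiv (Equiv.addRight d) (mem_evenDownSteps_rotate hN hd)

theorem psum_rotate_nonpos_iff (hN : 2 ∣ N) (hp : ∀ m, p m = 1 ∨ p m = -1)
    (htot : psum p N = 2) (hd : d ∈ evenDownSteps p) {m : Fin N}
    (hm : m + d ∈ evenDownSteps p) :
    psum (rotate d p) m ≤ 0 ↔ heightKey p (m + d) ≤ heightKey p d := by
  simp only [evenDownSteps, mem_filter, mem_univ, true_and] at hd hm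
  have hd2 := psum_emod_two hp d.is_lt.le
  have hm2 := psum_emod_two hp (m + d).is_lt.le
  rw [psum_rotate p d m.is_lt.le, heightKey, heightKey, Prod.Lex.toLex_le_toLex]
  rcases lt_or_ge ((d : ℕ) + m) N with h | h
  · have hval : ((m + d : Fin N) : ℕ) = d + m := by
      rw [Fin.val_add, Nat.mod_eq_of_lt (by omega), add_comm]
    rw [← psum_eq_sum_range p h.le, ← hval]
    omega
  · obtain ⟨r, hr⟩ := Nat.exists_eq_add_of_le h
    have hval : ((m + d : Fin N) : ℕ) = r := by
      rw [Fin.val_add, add_comm, hr, Nat.add_mod_left, Nat.mod_eq_of_lt (by omega)]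
    rw [hr, sum_range_period_add, ← psum_eq_sum_range p le_rfl,
      ← psum_eq_sum_range p (by omega), htot, ← hval]
    omega

theorem card_lowEvenDownSteps_rotate (hN : 2 ∣ N) (hp : ∀ m, p m = 1 ∨ p m = -1)
    (htot : psum p N = 2) (hd : d ∈ evenDownSteps p) :
    #(lowEvenDownSteps (rotate d p)) = heightRank p d := by
  rw [lowEvenDownSteps_eq_filter, heightRank]
  refine card_equiv (Equiv.addRight d) fun m => ?_
  simp only [mem_filter, Equiv.coe_addRight, mem_evenDownSteps_rotate hN (mem_filter.1 hd).2.2]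
  exact and_congr_right fun hm => psum_rotate_nonpos_iff hN hp htot hd hm

end EvenDownSteps

def downStartPaths (N r : ℕ) [NeZero N] : Finset (Fin N → ℤ) :=
  {p ∈ signPaths N | psum p N = 2 ∧ p 0 = -1 ∧ #(evenDownSteps p) = r}

section DoubleCounting

variable [NeZero N] {r : ℕ} {p : Fin N → ℤ} {d : Fin N}

theorem mem_downStartPaths : p ∈ downStartPaths N r ↔
    (∀ m, p m = 1 ∨ p m = -1) ∧ psum p N = 2 ∧ p 0 = -1 ∧ #(evenDownSteps p) = r := by
  rw [downStartPaths, mem_filter, mem_signPaths]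

theorem rotate_mem_downStartPaths (hN : 2 ∣ N) (hp : p ∈ downStartPaths N r)
    (hd : d ∈ evenDownSteps p) : rotate d p ∈ downStartPaths N r := by
  obtain ⟨hsign, htot, -, hr⟩ := mem_downStartPaths.1 hp
  refine mem_downStartPaths.2 ⟨fun m => hsign _, psum_rotate_self p d ▸ htot, ?_, ?_⟩
  · simpa [rotate] using (mem_filter.1 hd).2.1
  · rw [card_evenDownSteps_rotate hN (mem_filter.1 hd).2.2, hr]

theorem neg_mem_evenDownSteps_rotate (hN : 2 ∣ N) (h0 : p 0 = -1) (hd : d ∈ evenDownSteps p) :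
    -d ∈ evenDownSteps (rotate d p) := by
  rw [mem_evenDownSteps_rotate hN (mem_filter.1 hd).2.2, neg_add_cancel]
  simp [evenDownSteps, h0]

theorem heightRank_rotate_neg (hN : 2 ∣ N) (hp : p ∈ downStartPaths N r)
    (hd : d ∈ evenDownSteps p) :
    heightRank (rotate d p) (-d) = #(lowEvenDownSteps p) := by
  obtain ⟨hsign, htot, h0, -⟩ := mem_downStartPaths.1 (rotate_mem_downStartPaths hN hp hd)
  rw [← card_lowEvenDownSteps_rotate hN hsign htot
    (neg_mem_evenDownSteps_rotate hN (mem_downStartPaths.1 hp).2.2.1 hd), rotate_neg_rotate]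

theorem card_downStartPaths_eq_mul (hN : 2 ∣ N) {j : ℕ} (hj1 : 1 ≤ j) (hj2 : j ≤ r) :
    #(downStartPaths N r) = #{p ∈ downStartPaths N r | #(lowEvenDownSteps p) = j} * r := by
  set good := {p ∈ downStartPaths N r | #(lowEvenDownSteps p) = j}
  have hr {p} (hp : p ∈ downStartPaths N r) : #(evenDownSteps p) = r :=
    (mem_downStartPaths.1 hp).2.2.2
  have hrank {q} (hq : q ∈ downStartPaths N r) :=
    existsUnique_card_filter_le_s12 (heightKey_injective q) (s := evenDownSteps q) hj1 (hr hq ▸ hj2)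
  have hback {p d} (h : p ∈ good ∧ d ∈ evenDownSteps p) :
      -d ∈ evenDownSteps (rotate d p) ∧ heightRank (rotate d p) (-d) = j :=
    ⟨neg_mem_evenDownSteps_rotate hN (mem_downStartPaths.1 (mem_filter.1 h.1).1).2.2.1 h.2,
      (heightRank_rotate_neg hN (mem_filter.1 h.1).1 h.2).trans (mem_filter.1 h.1).2⟩
  calc #(downStartPaths N r)
      = #(good.sigma evenDownSteps) := by
        refine (card_bij (fun x _ => rotate x.2 x.1) (fun x hx => ?_) (fun x hx y hy hxy => ?_)
          (fun q hq => ?_)).symm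
        · rw [mem_sigma] at hx
          exact rotate_mem_downStartPaths hN (mem_filter.1 hx.1).1 hx.2
        · obtain ⟨p, d⟩ := x
          obtain ⟨p', d'⟩ := y
          rw [mem_sigma] at hx hy
          change rotate d p = rotate d' p' at hxy
          have hq := rotate_mem_downStartPaths hN (mem_filter.1 hx.1).1 hx.2
          obtain rfl : d = d' := neg_inj.1 ((hrank hq).unique (hback hx) (hxy ▸ hback hy))
          obtain rfl : p = p' := by rw [← rotate_neg_rotate p d, hxy, rotate_neg_rotate]
          rfl
        · obtain ⟨d, ⟨hd, hdj⟩, -⟩ := hrank hq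
          obtain ⟨hsign, htot, h0, -⟩ := mem_downStartPaths.1 hq
          have hlow := card_lowEvenDownSteps_rotate hN hsign htot hd
          exact ⟨⟨rotate d q, -d⟩, mem_sigma.2 ⟨mem_filter.2
            ⟨rotate_mem_downStartPaths hN hq hd, hlow.trans hdj⟩,
            neg_mem_evenDownSteps_rotate hN h0 hd⟩, rotate_neg_rotate q d⟩
    _ = #good * r := by
        rw [card_sigma, sum_const_nat fun p hp => hr (mem_filter.1 hp).1]

end DoubleCounting

theorem card_downStartPaths {n k : ℕ} [NeZero n] (hk : 2 ≤ k) :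
    #(downStartPaths (2 * n) (k - 1)) = n.choose k * (n - 1).choose (k - 2) := by
  rw [downStartPaths, card_filter_signPaths]
  simp only [psum_self, sum_ofDownSteps, evenDownSteps_ofDownSteps, ofDownSteps_eq_neg_one_iff]
  rcases le_or_gt k n with hkn | hkn
  · have hsplit (D : Finset (Fin (2 * n))) : ((2 * n : ℕ) : ℤ) - 2 * #D = 2 ∧ 0 ∈ D ∧
        #(D.filter fun m : Fin (2 * n) => (m : ℕ) % 2 = 0) = k - 1 ↔
        (0 ∈ D.filter (fun m : Fin (2 * n) => (m : ℕ) % 2 = 0) ∧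
          #(D.filter fun m : Fin (2 * n) => (m : ℕ) % 2 = 0) = (k - 2) + 1) ∧
        #(D.filter fun m : Fin (2 * n) => ¬(m : ℕ) % 2 = 0) = n - k := by
      have := card_filter_add_card_filter_not (s := D) fun m : Fin (2 * n) => (m : ℕ) % 2 = 0
      simp only [mem_filter, Fin.val_zero, Nat.zero_mod, and_true]
      constructor
      · rintro ⟨htot, h0, heven⟩
        exact ⟨⟨h0, by omega⟩, by omega⟩
      · rintro ⟨⟨h0, heven⟩, hodd⟩
        exact ⟨by omega, h0, by omega⟩
    rw [filter_congr fun D _ => hsplit D]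
    refine (card_filter_and_filter_not (fun m : Fin (2 * n) => (m : ℕ) % 2 = 0)
      (fun X => 0 ∈ X ∧ #X = k - 2 + 1) (fun Y => #Y = n - k)).trans ?_
    rw [card_powerset_filter_mem_and_card (by simp), ← powersetCard_eq_filter, card_powersetCard,
      Fin.card_filter_val_mod_two_eq_zero, Fin.card_filter_val_mod_two_ne_zero,
      Nat.choose_symm hkn, mul_comm]
  · rw [Nat.choose_eq_zero_of_lt hkn, zero_mul, card_eq_zero, filter_eq_empty_iff]
    rintro D - ⟨hD, -, hE⟩
    have := card_filter_le D fun m : Fin (2 * n) => (m : ℕ) % 2 = 0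
    omega

theorem psum_eq_two_iff {n : ℕ} {p : Fin (2 * n) → ℤ} (hp : ∀ m, p m = 1 ∨ p m = -1) :
    psum p (2 * n) = 2 ↔ #{m | p m = 1} = n + 1 := by
  rw [psum_self_of_sign hp]
  omega

end LatticePath

open LatticePath in
/-- Among paths in 𝒫(n−1,1,2) (length 2n, n+1 up steps, n−1 down steps) starting
with a down step and having exactly `k-1` down steps in even positions, for each
`1 ≤ j ≤ k-1` the number with exactly `j` even-position down steps starting on or
below the x-axis is `(1/(k-1))·C(n,k)·C(n-1,k-2)`, the Narayana number `N(n,k)`. -/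
theorem narayana_even_down_steps (n k : ℕ) (hn : 1 ≤ n) (hk : 2 ≤ k)
    (j : ℕ) (hj1 : 1 ≤ j) (hj2 : j ≤ k - 1) :
    Nat.card {p : Fin (2*n) → ℤ //
      (∀ m, p m = 1 ∨ p m = -1) ∧
      (univ.filter (fun m => p m = 1)).card = n + 1 ∧
      p ⟨0, by omega⟩ = -1 ∧
      (univ.filter (fun m : Fin (2*n) => p m = -1 ∧ (m : ℕ) % 2 = 0)).card = k - 1 ∧
      (univ.filter (fun m : Fin (2*n) =>
        p m = -1 ∧ (m : ℕ) % 2 = 0 ∧ psum p (m : ℕ) ≤ 0)).card = j }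
      * (k - 1) = Nat.choose n k * Nat.choose (n-1) (k-2) := by
  have : NeZero n := ⟨by omega⟩
  have hpaths : ∀ p : Fin (2 * n) → ℤ, ((∀ m, p m = 1 ∨ p m = -1) ∧
      #{m | p m = 1} = n + 1 ∧ p ⟨0, by omega⟩ = -1 ∧ #(evenDownSteps p) = k - 1 ∧
      #(lowEvenDownSteps p) = j) ↔
      p ∈ {p ∈ downStartPaths (2 * n) (k - 1) | #(lowEvenDownSteps p) = j} := by
    intro p
    rw [mem_filter, mem_downStartPaths]
    constructor
    · rintro ⟨hp, hup, h0, heven, hlow⟩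
      exact ⟨⟨hp, (psum_eq_two_iff hp).2 hup, h0, heven⟩, hlow⟩
    · rintro ⟨⟨hp, htot, h0, heven⟩, hlow⟩
      exact ⟨hp, (psum_eq_two_iff hp).1 htot, h0, heven, hlow⟩
  calc _ = #{p ∈ downStartPaths (2 * n) (k - 1) | #(lowEvenDownSteps p) = j} * (k - 1) :=
        congrArg (· * (k - 1))
          ((Nat.card_congr (Equiv.subtypeEquivRight hpaths)).trans (Nat.card_eq_finsetCard _))
    _ = #(downStartPaths (2 * n) (k - 1)) :=
        (card_downStartPaths_eq_mul (dvd_mul_right 2 n) hj1 hj2).symm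
    _ = n.choose k * (n - 1).choose (k - 2) := card_downStartPaths hk
end

section
/- Let r ≥ 1 and n ≥ 1. For each k with 1 ≤ k ≤ rn+1, the number of paths p in 𝒫(n,r,1) with p_1 = +1 such that exactly k up steps of p start on or below the x-axis equals (1/(rn+1))·C((r+1)n, n). -/
open Finset

/-!
A cycle-lemma argument. Let `q` be any of the `C(N, rn+1)` arrangements of the steps, with
`N = (r+1)n+1`; its total sum is `1`. Order its up steps by the height at which they start,
breaking ties by position in reverse. Rotating `q` so that it starts with the up step `t`, the
up steps starting on or below the axis are exactly those weakly below `t` in this order, so as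
`t` runs over the `rn+1` up steps the statistic takes every value `1, …, rn+1` exactly once.
Hence pairs (path counted, rotation amount) are in bijection with all arrangements, so
`N` times the count is `C(N, rn+1)`, and `(M+1) C(M, j) = C(M+1, j+1) (j+1)` finishes.
-/

theorem existsUnique_card_filter_le_eq_s14 {α ι : Type*} [LinearOrder ι] (s : Finset α)
    (κ : α → ι) (hκ : Set.InjOn κ s) {k : ℕ} (hk : k ∈ Icc 1 #s) :
    ∃! t, t ∈ s ∧ #{u ∈ s | κ u ≤ κ t} = k := by
  set rank : α → ℕ := fun t => #{u ∈ s | κ u ≤ κ t}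
  have rank_lt : ∀ a ∈ s, ∀ b ∈ s, κ a < κ b → rank a < rank b := by
    intro a _ b hb hab
    refine card_lt_card ((ssubset_iff_of_subset fun u hu => ?_).2 ⟨b, ?_, ?_⟩)
    · simp only [mem_filter] at hu ⊢
      exact ⟨hu.1, hu.2.trans hab.le⟩
    · simp [hb]
    · simp [hab]
  have rank_injOn : Set.InjOn rank s := by
    intro a ha b hb hab
    by_contra hne
    rcases lt_or_gt_of_ne ((hκ.ne_iff ha hb).2 hne) with h | h
    · exact (rank_lt a ha b hb h).ne hab
    · exact (rank_lt b hb a ha h).ne' hab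
  have image_rank : s.image rank = Icc 1 #s := by
    refine eq_of_subset_of_card_le (fun x hx => ?_) ?_
    · obtain ⟨t, ht, rfl⟩ := mem_image.1 hx
      exact mem_Icc.2 ⟨card_pos.2 ⟨t, by simp [ht]⟩, card_filter_le _ _⟩
    · simp [card_image_of_injOn rank_injOn]
  obtain ⟨t, ht, rfl⟩ := mem_image.1 (image_rank ▸ hk)
  exact ⟨t, ⟨ht, rfl⟩, fun u ⟨hu, hut⟩ => rank_injOn hu ht hut⟩

theorem card_twoValued_eq_choose {ι β : Type*} [Fintype ι] [DecidableEq β] {a b : β}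
    (hab : a ≠ b) (m : ℕ) :
    Nat.card {q : ι → β // (∀ i, q i = a ∨ q i = b) ∧ #{i | q i = a} = m} =
      (Fintype.card ι).choose m := by
  classical
  let e : {q : ι → β // (∀ i, q i = a ∨ q i = b) ∧ #{i | q i = a} = m} ≃
      {s : Finset ι // #s = m} :=
    { toFun := fun q => ⟨({i | q.1 i = a} : Finset ι), q.2.2⟩
      invFun := fun s => ⟨fun i => if i ∈ s.1 then a else b,
        fun i => by by_cases h : i ∈ s.1 <;> simp [h],
        by simpa [hab.symm] using s.2⟩
      left_inv := fun q => by
        ext i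
        rcases q.2.1 i with h | h <;> simp [h, hab.symm]
      right_inv := fun s => by
        ext i
        by_cases h : i ∈ s.1 <;> simp [h, hab.symm] }
  rw [Nat.card_congr e, Nat.card_eq_fintype_card, Fintype.card_finset_len]

theorem sum_eq_of_forall_eq_one_or_eq_neg {ι : Type*} [Fintype ι] {q : ι → ℤ} {r : ℤ}
    (hq : ∀ i, q i = 1 ∨ q i = -r) :
    ∑ i, q i = (r + 1) * #{i | q i = 1} - r * Fintype.card ι := by
  have hpoint : ∀ i, q i = -r + (r + 1) * if q i = 1 then 1 else 0 := fun i => by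
    split_ifs <;> have := hq i <;> omega
  rw [sum_congr rfl fun i _ => hpoint i, sum_add_distrib, ← mul_sum, sum_boole, sum_const,
    card_univ, nsmul_eq_mul]
  ring

theorem mul_eq_choose_of_mul_eq_choose_succ {c M j : ℕ}
    (h : c * (M + 1) = (M + 1).choose (j + 1)) : c * (j + 1) = M.choose j := by
  refine Nat.eq_of_mul_eq_mul_left (Nat.add_one_pos M) ?_
  rw [Nat.add_one_mul_choose_eq, ← h]
  ring

namespace ChungFeller

open Fin.NatCast

variable {N : ℕ}

def lowUps (p : Fin N → ℤ) : Finset (Fin N) := {i | p i = 1 ∧ psum p i ≤ 0}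

variable [NeZero N]

section Rotation

variable {α : Type*}

def rot (t : Fin N) (q : Fin N → α) : Fin N → α := fun j => q (j + t)

theorem rot_rot (s t : Fin N) (q : Fin N → α) : rot s (rot t q) = rot (s + t) q := by
  ext j
  simp [rot, add_assoc, add_comm s]

@[simp]
theorem rot_zero (q : Fin N → α) : rot 0 q = q := by
  ext j
  simp [rot]

theorem card_filter_rot (P : α → Prop) [DecidablePred P] (t : Fin N) (q : Fin N → α) :
    #{i | P (rot t q i)} = #{i | P (q i)} :=
  card_equiv (Equiv.addRight t) fun _ => by rw [mem_filter_univ, mem_filter_univ]; rfl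

end Rotation

def partialSum (q : Fin N → ℤ) (m : ℕ) : ℤ := ∑ i ∈ range m, q (i : Fin N)

theorem psum_eq_partialSum (q : Fin N → ℤ) {m : ℕ} (hm : m ≤ N) :
    psum q m = partialSum q m := by
  have hrange : (range N).filter (· < m) = range m := by
    ext i
    simp only [mem_filter, mem_range]
    omega
  rw [psum, partialSum, sum_filter, ← hrange, sum_filter]
  simpa using Fin.sum_univ_eq_sum_range (fun i => if i < m then q (i : Fin N) else 0) N

theorem partialSum_length_add (q : Fin N → ℤ) (m : ℕ) :
    partialSum q (N + m) = ∑ i, q i + partialSum q m := by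
  simp [partialSum, sum_range_add, ← Fin.sum_univ_eq_sum_range (fun i => q (i : Fin N)) N]

theorem partialSum_rot (t : Fin N) (q : Fin N → ℤ) (m : ℕ) :
    partialSum (rot t q) m = partialSum q (t + m) - partialSum q t := by
  rw [partialSum, partialSum, partialSum, sum_range_add, add_sub_cancel_left]
  simp [rot, add_comm]

/-- Up step `u` is weakly below `t` in this order iff `u` starts on or below the axis once the
path is rotated to start at `t` (see `psum_rot_nonpos_iff`). -/
def key (q : Fin N → ℤ) (u : Fin N) : ℤ ×ₗ (Fin N)ᵒᵈ :=
  toLex (partialSum q u, OrderDual.toDual u)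

theorem key_injective (q : Fin N → ℤ) : Function.Injective (key q) :=
  fun _ _ h => congrArg Prod.snd (toLex.injective h)

theorem psum_rot_nonpos_iff {q : Fin N → ℤ} (hq : ∑ i, q i = 1) (t i : Fin N) :
    psum (rot t q) i ≤ 0 ↔ key q (i + t) ≤ key q t := by
  rw [psum_eq_partialSum _ i.isLt.le, partialSum_rot, key, key, Prod.Lex.toLex_le_toLex,
    OrderDual.toDual_le_toDual, Fin.le_def, Fin.val_add_eq_ite]
  split_ifs with hwrap
  · -- wrapping around adds the total sum `1`, turning `≤` into `<`
    have : partialSum q (t + i) = 1 + partialSum q (i + t - N) := by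
      rw [← hq, ← partialSum_length_add]
      congr 1
      omega
    omega
  · rw [add_comm (t : ℕ)]
    omega

theorem card_lowUps_rot {q : Fin N → ℤ} (hq : ∑ i, q i = 1) (t : Fin N) :
    #(lowUps (rot t q)) = #{u ∈ {i | q i = 1} | key q u ≤ key q t} :=
  card_equiv (Equiv.addRight t) fun i => by
    rw [lowUps, mem_filter_univ, mem_filter, mem_filter_univ, psum_rot_nonpos_iff hq]
    rfl

theorem existsUnique_rot {q : Fin N → ℤ} (hq : ∑ i, q i = 1) {k : ℕ}
    (hk : k ∈ Icc 1 #{i | q i = 1}) : ∃! t, q t = 1 ∧ #(lowUps (rot t q)) = k := by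
  simpa only [card_lowUps_rot hq, mem_filter_univ] using
    existsUnique_card_filter_le_eq_s14 _ (key q) (key_injective q).injOn hk

theorem card_mul_eq_card_of_rot_invariant (P : (Fin N → ℤ) → Prop)
    (hrot : ∀ t q, P q → P (rot t q)) (hsum : ∀ q, P q → ∑ i, q i = 1) {m k : ℕ}
    (hups : ∀ q, P q → #{i | q i = 1} = m) (hk : k ∈ Icc 1 m) :
    Nat.card {p // P p ∧ p 0 = 1 ∧ #(lowUps p) = k} * N = Nat.card {q // P q} := by
  let unrot : {p // P p ∧ p 0 = 1 ∧ #(lowUps p) = k} × Fin N → {q // P q} :=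
    fun pt => ⟨rot (-pt.2) pt.1.1, hrot _ _ pt.1.2.1⟩
  have hunrot : Function.Bijective unrot := by
    refine (Function.bijective_iff_existsUnique unrot).2 fun ⟨q, hq⟩ => ?_
    obtain ⟨t, ⟨ht, htk⟩, huniq⟩ := existsUnique_rot (hsum q hq) (hups q hq ▸ hk)
    refine ⟨(⟨rot t q, hrot t q hq, by simpa [rot] using ht, htk⟩, t), ?_, ?_⟩
    · simp [unrot, rot_rot]
    · rintro ⟨⟨p, hp, hp0, hpk⟩, s⟩ h
      obtain rfl : rot (-s) p = q := congrArg Subtype.val h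
      obtain rfl : s = t := huniq s ⟨by simpa [rot] using hp0, by simpa [rot_rot] using hpk⟩
      simp [rot_rot]
  rw [← Nat.card_eq_of_bijective unrot hunrot, Nat.card_prod,
    Nat.card_eq_fintype_card (α := Fin N), Fintype.card_fin]

end ChungFeller

open ChungFeller in
theorem generalized_catalan_chung_feller_up_general (r n : ℕ)
    (k : ℕ) (hk1 : 1 ≤ k) (hk2 : k ≤ r*n + 1) :
    Nat.card {p : Fin ((r+1)*n+1) → ℤ //
      (∀ i, p i = 1 ∨ p i = -(r : ℤ)) ∧
      (univ.filter (fun i => p i = 1)).card = r*n + 1 ∧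
      p ⟨0, Nat.succ_pos _⟩ = 1 ∧
      (univ.filter (fun i : Fin ((r+1)*n+1) => p i = 1 ∧ psum p (i : ℕ) ≤ 0)).card = k }
      * (r*n + 1) = Nat.choose ((r+1)*n) n := by
  let IsPath (q : Fin ((r+1)*n+1) → ℤ) : Prop :=
    (∀ i, q i = 1 ∨ q i = -(r : ℤ)) ∧ #{i | q i = 1} = r*n + 1
  have hrot : ∀ t q, IsPath q → IsPath (rot t q) :=
    fun t q hq => ⟨fun i => hq.1 _, (card_filter_rot (· = 1) t q).trans hq.2⟩
  have hsum : ∀ q, IsPath q → ∑ i, q i = 1 := fun q hq => by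
    rw [sum_eq_of_forall_eq_one_or_eq_neg hq.1, hq.2, Fintype.card_fin]
    push_cast
    ring
  have hcycle := card_mul_eq_card_of_rot_invariant IsPath hrot hsum (fun _ hq => hq.2)
    (mem_Icc.2 ⟨hk1, hk2⟩)
  rw [card_twoValued_eq_choose (by omega) (r*n + 1), Fintype.card_fin] at hcycle
  simp only [IsPath, and_assoc, lowUps] at hcycle
  have hsymm : ((r+1)*n).choose n = ((r+1)*n).choose (r*n) := by
    rw [show (r+1)*n = r*n + n by ring, Nat.choose_symm_add]
  rw [Fin.zero_eta, hsymm]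
  exact mul_eq_choose_of_mul_eq_choose_succ hcycle

/-- Among paths in 𝒫(n,r,1) (steps +1 or −r, with rn+1 up steps and n down steps)
starting with an up step, for each `1 ≤ k ≤ rn+1` the number with exactly `k` up
steps starting on or below the x-axis is `(1/(rn+1))·C((r+1)n,n)`. -/
theorem generalized_catalan_chung_feller_up (r n : ℕ) (hr : 1 ≤ r) (hn : 1 ≤ n)
    (k : ℕ) (hk1 : 1 ≤ k) (hk2 : k ≤ r*n + 1) :
    Nat.card {p : Fin ((r+1)*n+1) → ℤ //
      (∀ i, p i = 1 ∨ p i = -(r : ℤ)) ∧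
      (univ.filter (fun i => p i = 1)).card = r*n + 1 ∧
      p ⟨0, Nat.succ_pos _⟩ = 1 ∧
      (univ.filter (fun i : Fin ((r+1)*n+1) => p i = 1 ∧ psum p (i : ℕ) ≤ 0)).card = k }
      * (r*n + 1) = Nat.choose ((r+1)*n) n :=
  generalized_catalan_chung_feller_up_general r n k hk1 hk2
end

section
/- Let r ≥ 1 and n ≥ 1 with rn ≥ 1. For each k with 1 ≤ k ≤ (r+1)n−1, the number of paths p in 𝒫(n,r,−1) such that exactly k of the vertices s_0, s_1, …, s_{(r+1)n−2} satisfy s_i ≥ 0 equals (1/((r+1)n−1))·C((r+1)n−1, n). -/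
/-!
Cyclic lemma. Extend a path `p` of length `N` and total height `-1` periodically; the heights
`S` of the extension satisfy `S (t + N) = S t - 1`. Vertex `m` of the rotation of `p` starting at
`j` lies on or above the axis iff `S j ≤ S (j + m)`, i.e. iff the vertex `i ≡ j + m (mod N)` of `p`
satisfies `(S j, j) ≤ (S i, i)` lexicographically: after wrapping around, the `-1` turns `≤` into
`<`. Hence that rotation has as many such vertices as there are indices `i` at or above `j` in
this total order, and the `N` rotations of `p` realise every count `1, …, N` exactly once.
Double counting pairs (path, rotation) over the rotation-invariant set of all `C(N, n)` paths
proves the theorem.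
-/

open Finset

open Function

namespace Finset

lemma card_filter_piFinset_pair_eq_choose {ι α : Type*} [Fintype ι] [DecidableEq ι]
    [DecidableEq α] {a b : α} (hab : a ≠ b) (U : ℕ) :
    #{p ∈ Fintype.piFinset fun _ : ι => ({a, b} : Finset α) | #{i | p i = a} = U}
      = (Fintype.card ι).choose U := by
  have hfilter (s : Finset ι) : ({i | (if i ∈ s then a else b) = a} : Finset ι) = s := by
    ext i; by_cases hi : i ∈ s <;> simp [hi, hab.symm]
  rw [← card_univ, ← card_powersetCard]
  refine card_nbij' (fun p => ({i | p i = a} : Finset ι)) (fun s i => if i ∈ s then a else b)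
    ?_ ?_ ?_ ?_
  · intro p hp
    simp_all [mem_powersetCard]
  · intro s hs
    simp only [coe_filter, Set.mem_ofPred_eq, Fintype.mem_piFinset, hfilter,
      (mem_powersetCard.mp hs).2, and_true]
    intro i; split_ifs <;> simp
  · intro p hp
    simp only [coe_filter, Set.mem_ofPred_eq, Fintype.mem_piFinset, mem_insert,
      mem_singleton] at hp
    funext i
    rcases hp.1 i with h | h <;> simp [h, hab.symm]
  · intro s _
    exact hfilter s

section Rank

variable {α β : Type*} [Fintype α] [LinearOrder β]

lemma card_filter_le_lt_of_lt (f : α → β) {a a' : α} (h : f a < f a') :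
    #{b | f a' ≤ f b} < #{b | f a ≤ f b} := by
  refine card_lt_card ((ssubset_iff_of_subset ?_).mpr ⟨a, ?_, ?_⟩)
  · exact monotone_filter_right _ fun _ _ => h.le.trans
  · simp
  · simpa using h

lemma card_filter_card_filter_le_eq_one {f : α → β} (hf : Injective f) {k : ℕ} (hk1 : 1 ≤ k)
    (hk2 : k ≤ Fintype.card α) : #{a | #{b | f a ≤ f b} = k} = 1 := by
  set g : α → ℕ := fun a => #{b | f a ≤ f b}
  have hg : Injective g := by
    intro a a' h
    by_contra hne
    rcases (hf.ne hne).lt_or_gt with hlt | hlt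
    · exact (card_filter_le_lt_of_lt f hlt).ne h.symm
    · exact (card_filter_le_lt_of_lt f hlt).ne h
  have himage : univ.image g = Icc 1 (Fintype.card α) := by
    refine eq_of_subset_of_card_le (fun x hx => ?_) ?_
    · obtain ⟨a, -, rfl⟩ := mem_image.mp hx
      exact mem_Icc.mpr ⟨card_pos.mpr ⟨a, by simp⟩, card_le_univ _⟩
    · rw [card_image_of_injective _ hg, Nat.card_Icc, card_univ]
      omega
  obtain ⟨a, -, ha⟩ := mem_image.mp (himage ▸ mem_Icc.mpr ⟨hk1, hk2⟩ : k ∈ univ.image g)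
  refine card_eq_one.mpr ⟨a, ?_⟩
  ext b
  simp only [mem_filter, mem_univ, true_and, mem_singleton]
  exact ⟨fun hb => hg (hb.trans ha.symm), fun hb => hb ▸ ha⟩

end Rank

end Finset

open Fin.NatCast

namespace ChungFeller

variable {N : ℕ}

def nonnegHeightCount (p : Fin N → ℤ) : ℕ := #{m ∈ range N | 0 ≤ psum p m}

lemma nonnegHeightCount_eq_card_fin (p : Fin N → ℤ) :
    nonnegHeightCount p = #{m : Fin N | 0 ≤ psum p m} := by
  rw [nonnegHeightCount, ← Nat.Iio_eq_range, ← Fin.map_valEmbedding_univ, filter_map, card_map]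
  rfl

def stepPaths (N r U : ℕ) : Finset (Fin N → ℤ) :=
  {p ∈ Fintype.piFinset fun _ => {1, -(r : ℤ)} | #{i | p i = 1} = U}

lemma mem_stepPaths {r U : ℕ} {p : Fin N → ℤ} :
    p ∈ stepPaths N r U ↔ (∀ i, p i = 1 ∨ p i = -(r : ℤ)) ∧ #{i | p i = 1} = U := by
  rw [stepPaths, Finset.mem_filter, Fintype.mem_piFinset]
  simp only [mem_insert, mem_singleton]

lemma card_stepPaths (N r U : ℕ) : #(stepPaths N r U) = N.choose U := by
  rw [stepPaths, card_filter_piFinset_pair_eq_choose (by omega), Fintype.card_fin]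

lemma sum_eq_of_mem_stepPaths {r U : ℕ} {p : Fin N → ℤ} (hp : p ∈ stepPaths N r U) :
    ∑ i, p i = U - r * ((N : ℤ) - U) := by
  obtain ⟨hsteps, hU⟩ := mem_stepPaths.mp hp
  have hUN : U ≤ N := hU ▸ (card_le_univ _).trans_eq (Fintype.card_fin N)
  have hdown : #{i | ¬p i = 1} = N - U := by
    have := card_filter_add_card_filter_not (s := univ) (fun i => p i = 1)
    rw [card_univ, Fintype.card_fin] at this
    omega
  calc ∑ i, p i = ∑ i, if p i = 1 then 1 else -(r : ℤ) :=
        sum_congr rfl fun i _ => by rcases hsteps i with h | h <;> simp [h]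
    _ = U - r * ((N : ℤ) - U) := by
        rw [sum_ite, sum_const, sum_const, hU, hdown, nsmul_eq_mul, nsmul_eq_mul,
          Nat.cast_sub hUN]
        ring

variable [NeZero N]

def rotate {α : Type*} (j : Fin N) (p : Fin N → α) : Fin N → α := fun i => p (i + j)

lemma rotate_neg_rotate {α : Type*} (j : Fin N) (p : Fin N → α) :
    rotate (-j) (rotate j p) = p := by
  funext i; simp [rotate]

lemma rotate_rotate_neg {α : Type*} (j : Fin N) (p : Fin N → α) :
    rotate j (rotate (-j) p) = p := by
  simpa using rotate_neg_rotate (-j) p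

def periodicPsum (p : Fin N → ℤ) (t : ℕ) : ℤ := ∑ s ∈ range t, p (s : Fin N)

lemma psum_eq_periodicPsum (p : Fin N → ℤ) {m : ℕ} (hm : m ≤ N) :
    psum p m = periodicPsum p m := by
  have h := Fin.sum_univ_eq_sum_range (fun s => if s < m then p s else 0) N
  simp only [Fin.cast_val_eq_self] at h
  rw [psum, sum_filter, h, ← sum_filter, periodicPsum]
  congr 1
  ext s
  simp only [mem_filter, mem_range]
  omega

lemma periodicPsum_add_period (p : Fin N → ℤ) (t : ℕ) :
    periodicPsum p (N + t) = ∑ i, p i + periodicPsum p t := by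
  simp only [periodicPsum, sum_range_add, Nat.cast_add, Fin.natCast_self, zero_add]
  rw [← Fin.sum_univ_eq_sum_range (fun s => p s)]
  simp [Fin.cast_val_eq_self]

lemma psum_rotate (j : Fin N) (p : Fin N → ℤ) {m : ℕ} (hm : m ≤ N) :
    psum (rotate j p) m = periodicPsum p (j + m) - periodicPsum p j := by
  simp only [psum_eq_periodicPsum _ hm, periodicPsum, sum_range_add, add_sub_cancel_left]
  simp only [rotate, Nat.cast_add, Fin.cast_val_eq_self, add_comm]

lemma nonnegHeightCount_rotate (p : Fin N → ℤ) (hp : ∑ i, p i = -1) (j : Fin N) :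
    nonnegHeightCount (rotate j p)
      = #{i : Fin N | toLex (psum p j, j) ≤ toLex (psum p i, i)} := by
  rw [nonnegHeightCount_eq_card_fin]
  refine card_equiv (Equiv.addRight j) fun m => ?_
  have hS (i : Fin N) : psum p i = periodicPsum p i := psum_eq_periodicPsum p i.is_lt.le
  simp only [mem_filter, mem_univ, true_and, Equiv.coe_addRight, Prod.Lex.toLex_le_toLex,
    psum_rotate j p m.is_lt.le, hS, Fin.le_def]
  have hv := Fin.val_add_eq_ite m j
  split_ifs at hv with hmj
  · have hwrap : (j : ℕ) + m = N + (m + j : Fin N) := by omega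
    rw [hwrap, periodicPsum_add_period, hp]
    omega
  · rw [hv, add_comm (m : ℕ)]
    omega

lemma card_filter_nonnegHeightCount_rotate_eq_one (p : Fin N → ℤ) (hp : ∑ i, p i = -1)
    {k : ℕ} (hk1 : 1 ≤ k) (hk2 : k ≤ N) :
    #{j : Fin N | nonnegHeightCount (rotate j p) = k} = 1 := by
  simp_rw [nonnegHeightCount_rotate p hp]
  refine card_filter_card_filter_le_eq_one (f := fun i : Fin N => toLex (psum p i, i)) ?_ hk1
    (by simpa)
  intro i i' h
  simpa using congrArg (fun x => (ofLex x).2) h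

lemma card_filter_rotate_eq (A : Finset (Fin N → ℤ)) (hA : ∀ j p, rotate j p ∈ A ↔ p ∈ A)
    (P : (Fin N → ℤ) → Prop) [DecidablePred P] (j : Fin N) :
    #{p ∈ A | P (rotate j p)} = #{p ∈ A | P p} := by
  refine card_nbij' (rotate j) (rotate (-j)) ?_ ?_ ?_ ?_
  · intro p hp; simp_all
  · intro p hp; simp_all [rotate_rotate_neg]
  · intro p _; exact rotate_neg_rotate j p
  · intro p _; exact rotate_rotate_neg j p

theorem card_filter_nonnegHeightCount_mul (A : Finset (Fin N → ℤ))
    (hA : ∀ j p, rotate j p ∈ A ↔ p ∈ A) (hsum : ∀ p ∈ A, ∑ i, p i = -1) {k : ℕ}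
    (hk1 : 1 ≤ k) (hk2 : k ≤ N) : #{p ∈ A | nonnegHeightCount p = k} * N = #A := calc
  #{p ∈ A | nonnegHeightCount p = k} * N
      = ∑ j : Fin N, #{p ∈ A | nonnegHeightCount (rotate j p) = k} := by
        rw [sum_congr rfl fun j _ => card_filter_rotate_eq A hA (nonnegHeightCount · = k) j,
          sum_const, card_univ, Fintype.card_fin, smul_eq_mul, mul_comm]
  _ = ∑ p ∈ A, #{j : Fin N | nonnegHeightCount (rotate j p) = k} := by
        simp only [card_filter]
        exact sum_comm
  _ = ∑ p ∈ A, 1 := sum_congr rfl fun p hp =>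
        card_filter_nonnegHeightCount_rotate_eq_one p (hsum p hp) hk1 hk2
  _ = #A := (card_eq_sum_ones A).symm

lemma rotate_mem_stepPaths_iff {r U : ℕ} (j : Fin N) (p : Fin N → ℤ) :
    rotate j p ∈ stepPaths N r U ↔ p ∈ stepPaths N r U := by
  have hcount : #{i | rotate j p i = 1} = #{i | p i = 1} :=
    card_equiv (Equiv.addRight j) fun i => by
      simp only [Finset.mem_filter_univ, Equiv.coe_addRight]
      rfl
  rw [mem_stepPaths, mem_stepPaths, hcount]
  exact and_congr_left' ⟨fun h a => by simpa [rotate] using h (a - j), fun h a => h (a + j)⟩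

end ChungFeller

open ChungFeller in
theorem generalized_catalan_chung_feller_neg_general (r n : ℕ)
    (hrn : 1 ≤ r*n) (k : ℕ) (hk1 : 1 ≤ k) (hk2 : k ≤ (r+1)*n - 1) :
    Nat.card {p : Fin ((r+1)*n - 1) → ℤ //
      (∀ i, p i = 1 ∨ p i = -(r : ℤ)) ∧
      (univ.filter (fun i => p i = 1)).card = r*n - 1 ∧
      (((Finset.range ((r+1)*n - 1)).filter (fun m => 0 ≤ psum p m)).card = k) }
      * ((r+1)*n - 1) = Nat.choose ((r+1)*n - 1) n := by
  have : NeZero ((r+1)*n - 1) := ⟨by omega⟩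
  have hN : (r+1)*n - 1 = (r*n - 1) + n := by rw [add_mul, one_mul]; omega
  have hsum (p) (hp : p ∈ stepPaths ((r+1)*n - 1) r (r*n - 1)) : ∑ i, p i = -1 := by
    rw [sum_eq_of_mem_stepPaths hp, hN]
    push_cast [hrn]
    ring
  calc _ = #{p ∈ stepPaths ((r+1)*n - 1) r (r*n - 1) | nonnegHeightCount p = k}
        * ((r+1)*n - 1) := by
        rw [← Nat.card_eq_finsetCard]
        congr 1
        refine Nat.card_congr (Equiv.subtypeEquivRight fun p => ?_)
        rw [Finset.mem_filter, mem_stepPaths, and_assoc]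
        rfl
    _ = ((r+1)*n - 1).choose (r*n - 1) := by
        rw [card_filter_nonnegHeightCount_mul _ rotate_mem_stepPaths_iff hsum hk1 hk2,
          card_stepPaths]
    _ = ((r+1)*n - 1).choose n := by rw [hN, Nat.choose_symm_add]

/-- Among paths in 𝒫(n,r,−1) (steps +1 or −r, with rn−1 up steps and n down steps),
for each `1 ≤ k ≤ (r+1)n−1` the number with exactly `k` of the vertices
`s_0, …, s_{(r+1)n−2}` on or above the x-axis is `(1/((r+1)n−1))·C((r+1)n−1,n)`. -/
theorem generalized_catalan_chung_feller_neg (r n : ℕ) (hr : 1 ≤ r) (hn : 1 ≤ n)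
    (hrn : 1 ≤ r*n) (k : ℕ) (hk1 : 1 ≤ k) (hk2 : k ≤ (r+1)*n - 1) :
    Nat.card {p : Fin ((r+1)*n - 1) → ℤ //
      (∀ i, p i = 1 ∨ p i = -(r : ℤ)) ∧
      (univ.filter (fun i => p i = 1)).card = r*n - 1 ∧
      (((Finset.range ((r+1)*n - 1)).filter (fun m => 0 ≤ psum p m)).card = k) }
      * ((r+1)*n - 1) = Nat.choose ((r+1)*n - 1) n :=
  generalized_catalan_chung_feller_neg_general r n hrn k hk1 hk2
end
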